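/- arXiv:1001.4760 — 6 statements merged into one kernel-verified Lean document; each statement's English description precedes it below -/
import Mathlib

section
/- The elements α = 1 - x_i, β = 1 - x_j, γ = 3 - x_i - x_j - x_k, δ = 2 - y form a ℤ-basis of the augmentation ideal I(Q8) of the representation ring R(Q8). -/
/-!  The representation ring `R(Q₈)` is modelled faithfully via characters: the character
map identifies `R(Q₈)` with the ring of `ℤ`-linear combinations of the characters of the
irreducible representations `1, x_i, x_j, x_k, y`, viewed as `ℤ`-valued functions on the
five conjugacy classes `1, -1, ±i, ±j, ±k` (in this order), with pointwise
multiplication.  The unit `1` of the ring `Fin 5 → ℤ` is the character of the trivial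
representation. -/

/-- character of `x_i` -/
def chi_i : Fin 5 → ℤ := ![1, 1, 1, -1, -1]
/-- character of `x_j` -/
def chi_j : Fin 5 → ℤ := ![1, 1, -1, 1, -1]
/-- character of `x_k` -/
def chi_k : Fin 5 → ℤ := ![1, 1, -1, -1, 1]
/-- character of the 2-dimensional irreducible representation `y` -/
def chi_y : Fin 5 → ℤ := ![2, -2, 0, 0, 0]

/-- `R(Q₈)`, as the group of `ℤ`-linear combinations of the five irreducible characters. -/
def RQ8 : Submodule ℤ (Fin 5 → ℤ) :=
  Submodule.span ℤ {1, chi_i, chi_j, chi_k, chi_y}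

def alpha : Fin 5 → ℤ := 1 - chi_i
def beta : Fin 5 → ℤ := 1 - chi_j
def gam : Fin 5 → ℤ := 3 - chi_i - chi_j - chi_k
def del : Fin 5 → ℤ := 2 - chi_y

lemma alpha_eq : alpha = ![0, 0, 0, 2, 2] := by
  funext i; fin_cases i <;> simp [alpha, chi_i] <;> rfl

lemma beta_eq : beta = ![0, 0, 2, 0, 2] := by
  funext i; fin_cases i <;> simp [beta, chi_j] <;> rfl

lemma gam_eq : gam = ![0, 0, 4, 4, 4] := by
  funext i; fin_cases i <;> simp [gam, chi_i, chi_j, chi_k] <;> rfl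

lemma del_eq : del = ![0, 4, 2, 2, 2] := by
  funext i; fin_cases i <;> simp [del, chi_y] <;> rfl

/-- The elements `α = 1 - x_i`, `β = 1 - x_j`, `γ = 3 - x_i - x_j - x_k`, `δ = 2 - y`
form a `ℤ`-basis of the augmentation ideal `I(Q₈)` of `R(Q₈)`, i.e. they are linearly
independent over `ℤ` and span the kernel of the augmentation (dimension) homomorphism,
which is evaluation at the conjugacy class of `1` (coordinate `0`). -/
theorem q8_augmentation_ideal_basis :
    LinearIndependent ℤ ![alpha, beta, gam, del] ∧
    Submodule.span ℤ {alpha, beta, gam, del} =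
      RQ8 ⊓ LinearMap.ker (LinearMap.proj 0 : (Fin 5 → ℤ) →ₗ[ℤ] ℤ) := by
  have h1 : (1 : Fin 5 → ℤ) ∈ RQ8 := Submodule.subset_span (by simp)
  have hi : chi_i ∈ RQ8 := Submodule.subset_span (by simp)
  have hj : chi_j ∈ RQ8 := Submodule.subset_span (by simp)
  have hk : chi_k ∈ RQ8 := Submodule.subset_span (by simp)
  have hy : chi_y ∈ RQ8 := Submodule.subset_span (by simp)
  constructor
  · rw [Fintype.linearIndependent_iff]
    intro g hg
    have e1 := congrFun hg 1
    have e2 := congrFun hg 2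
    have e3 := congrFun hg 3
    have e4 := congrFun hg 4
    simp [Fin.sum_univ_succ, alpha_eq, beta_eq, gam_eq, del_eq] at e1 e2 e3 e4
    have h0 : g 0 = 0 := by omega
    have h1 : g 1 = 0 := by omega
    have h2 : g 2 = 0 := by omega
    have h3 : g 3 = 0 := by omega
    intro i
    fin_cases i <;> assumption
  · apply le_antisymm
    · rw [Submodule.span_le]
      intro v hv
      simp only [Set.mem_insert_iff, Set.mem_singleton_iff] at hv
      constructor
      · rcases hv with rfl | rfl | rfl | rfl
        · exact sub_mem h1 hi
        · exact sub_mem h1 hj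
        · have : gam = (3 : ℤ) • (1 : Fin 5 → ℤ) - chi_i - chi_j - chi_k := by
            rw [gam]; norm_num
          rw [this]
          exact sub_mem (sub_mem (sub_mem (Submodule.smul_mem _ _ h1) hi) hj) hk
        · have : del = (2 : ℤ) • (1 : Fin 5 → ℤ) - chi_y := by
            rw [del]; norm_num
          rw [this]
          exact sub_mem (Submodule.smul_mem _ _ h1) hy
      · rcases hv with rfl | rfl | rfl | rfl <;>
          simp [LinearMap.mem_ker, alpha_eq, beta_eq, gam_eq, del_eq]
    · rintro x ⟨hx, hx0⟩
      set S := Submodule.span ℤ {alpha, beta, gam, del}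
      have ha : alpha ∈ S := Submodule.subset_span (by simp)
      have hb : beta ∈ S := Submodule.subset_span (by simp)
      have hc : gam ∈ S := Submodule.subset_span (by simp)
      have hd : del ∈ S := Submodule.subset_span (by simp)
      have hRQ8 : RQ8 ≤ S ⊔ Submodule.span ℤ {(1 : Fin 5 → ℤ)} := by
        rw [RQ8, Submodule.span_le]
        have h1' : (1 : Fin 5 → ℤ) ∈ S ⊔ Submodule.span ℤ {(1 : Fin 5 → ℤ)} :=
          Submodule.mem_sup_right (Submodule.subset_span rfl)
        intro v hv
        simp only [Set.mem_insert_iff, Set.mem_singleton_iff] at hv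
        rcases hv with rfl | rfl | rfl | rfl | rfl
        · exact h1'
        · have : chi_i = 1 - alpha := by rw [alpha]; abel
          rw [this]; exact sub_mem h1' (Submodule.mem_sup_left ha)
        · have : chi_j = 1 - beta := by rw [beta]; abel
          rw [this]; exact sub_mem h1' (Submodule.mem_sup_left hb)
        · have : chi_k = 1 + alpha + beta - gam := by
            rw [alpha, beta, gam]
            funext i; fin_cases i <;> simp [chi_i, chi_j, chi_k] <;> rfl
          rw [this]
          exact sub_mem (add_mem (add_mem h1' (Submodule.mem_sup_left ha))
            (Submodule.mem_sup_left hb)) (Submodule.mem_sup_left hc)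
        · have : chi_y = (2 : ℤ) • (1 : Fin 5 → ℤ) - del := by rw [del]; norm_num
          rw [this]
          exact sub_mem (Submodule.smul_mem _ _ h1') (Submodule.mem_sup_left hd)
      have hS0 : ∀ v ∈ S, v 0 = 0 := by
        intro v hv
        have : S ≤ LinearMap.ker (LinearMap.proj 0 : (Fin 5 → ℤ) →ₗ[ℤ] ℤ) := by
          rw [Submodule.span_le]
          intro w hw
          simp only [Set.mem_insert_iff, Set.mem_singleton_iff] at hw
          rcases hw with rfl | rfl | rfl | rfl <;>
            simp [LinearMap.mem_ker, alpha_eq, beta_eq, gam_eq, del_eq]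
        exact this hv
      obtain ⟨v, hv, w, hw, rfl⟩ := Submodule.mem_sup.mp (hRQ8 hx)
      obtain ⟨t, rfl⟩ := Submodule.mem_span_singleton.mp hw
      have hx0' : (v + t • (1 : Fin 5 → ℤ)) 0 = 0 := hx0
      have : v 0 + t = 0 := by simpa using hx0'
      have ht : t = 0 := by have := hS0 v hv; omega
      simpa [ht] using hv
end

section
/- The principal ideal (δ) of R(Q8) generated by δ = 2 - y, intersected with the augmentation ideal I(Q8), is the subgroup generated by 2α, 2β, γ, δ, and the quotient I(Q8)/(δ) is isomorphic to ℤ/2 ⊕ ℤ/2, generated by the classes of α and β. -/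
set_option maxHeartbeats 1000000


/-- The augmentation ideal `I(Q₈)`, with its `ℤ`-basis `α, β, γ, δ`. -/
def IQ8 : Submodule ℤ (Fin 5 → ℤ) := Submodule.span ℤ {alpha, beta, gam, del}

/-- The principal ideal `(δ)` of `R(Q₈)` generated by `δ = 2 - y`: its underlying
additive group is spanned by `δ` times the `ℤ`-basis `1, x_i, x_j, x_k, y` of `R(Q₈)`. -/
def idealDel : Submodule ℤ (Fin 5 → ℤ) :=
  Submodule.span ℤ {del * 1, del * chi_i, del * chi_j, del * chi_k, del * chi_y}

lemma alpha_mem_IQ8 : alpha ∈ IQ8 :=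
  Submodule.subset_span (by simp)

lemma beta_mem_IQ8 : beta ∈ IQ8 :=
  Submodule.subset_span (by simp)


lemma gd1_0 : (del * 1) (0 : Fin 5) = 0 := by decide
lemma gd1_1 : (del * 1) (1 : Fin 5) = 4 := by decide
lemma gd1_2 : (del * 1) (2 : Fin 5) = 2 := by decide
lemma gd1_3 : (del * 1) (3 : Fin 5) = 2 := by decide
lemma gd1_4 : (del * 1) (4 : Fin 5) = 2 := by decide
lemma gdi_0 : (del * chi_i) (0 : Fin 5) = 0 := by decide
lemma gdi_1 : (del * chi_i) (1 : Fin 5) = 4 := by decide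
lemma gdi_2 : (del * chi_i) (2 : Fin 5) = 2 := by decide
lemma gdi_3 : (del * chi_i) (3 : Fin 5) = -2 := by decide
lemma gdi_4 : (del * chi_i) (4 : Fin 5) = -2 := by decide
lemma gdj_0 : (del * chi_j) (0 : Fin 5) = 0 := by decide
lemma gdj_1 : (del * chi_j) (1 : Fin 5) = 4 := by decide
lemma gdj_2 : (del * chi_j) (2 : Fin 5) = -2 := by decide
lemma gdj_3 : (del * chi_j) (3 : Fin 5) = 2 := by decide
lemma gdj_4 : (del * chi_j) (4 : Fin 5) = -2 := by decide
lemma gdk_0 : (del * chi_k) (0 : Fin 5) = 0 := by decide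
lemma gdk_1 : (del * chi_k) (1 : Fin 5) = 4 := by decide
lemma gdk_2 : (del * chi_k) (2 : Fin 5) = -2 := by decide
lemma gdk_3 : (del * chi_k) (3 : Fin 5) = -2 := by decide
lemma gdk_4 : (del * chi_k) (4 : Fin 5) = 2 := by decide
lemma gdy_0 : (del * chi_y) (0 : Fin 5) = 0 := by decide
lemma gdy_1 : (del * chi_y) (1 : Fin 5) = -8 := by decide
lemma gdy_2 : (del * chi_y) (2 : Fin 5) = 0 := by decide
lemma gdy_3 : (del * chi_y) (3 : Fin 5) = 0 := by decide
lemma gdy_4 : (del * chi_y) (4 : Fin 5) = 0 := by decide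
lemma ga_0 : (alpha) (0 : Fin 5) = 0 := by decide
lemma ga_1 : (alpha) (1 : Fin 5) = 0 := by decide
lemma ga_2 : (alpha) (2 : Fin 5) = 0 := by decide
lemma ga_3 : (alpha) (3 : Fin 5) = 2 := by decide
lemma ga_4 : (alpha) (4 : Fin 5) = 2 := by decide
lemma gb_0 : (beta) (0 : Fin 5) = 0 := by decide
lemma gb_1 : (beta) (1 : Fin 5) = 0 := by decide
lemma gb_2 : (beta) (2 : Fin 5) = 2 := by decide
lemma gb_3 : (beta) (3 : Fin 5) = 0 := by decide
lemma gb_4 : (beta) (4 : Fin 5) = 2 := by decide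
lemma gg_0 : (gam) (0 : Fin 5) = 0 := by decide
lemma gg_1 : (gam) (1 : Fin 5) = 0 := by decide
lemma gg_2 : (gam) (2 : Fin 5) = 4 := by decide
lemma gg_3 : (gam) (3 : Fin 5) = 4 := by decide
lemma gg_4 : (gam) (4 : Fin 5) = 4 := by decide
lemma gd_0 : (del) (0 : Fin 5) = 0 := by decide
lemma gd_1 : (del) (1 : Fin 5) = 4 := by decide
lemma gd_2 : (del) (2 : Fin 5) = 2 := by decide
lemma gd_3 : (del) (3 : Fin 5) = 2 := by decide
lemma gd_4 : (del) (4 : Fin 5) = 2 := by decide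
lemma g2a_0 : ((2 : ℤ) • alpha) (0 : Fin 5) = 0 := by decide
lemma g2a_1 : ((2 : ℤ) • alpha) (1 : Fin 5) = 0 := by decide
lemma g2a_2 : ((2 : ℤ) • alpha) (2 : Fin 5) = 0 := by decide
lemma g2a_3 : ((2 : ℤ) • alpha) (3 : Fin 5) = 4 := by decide
lemma g2a_4 : ((2 : ℤ) • alpha) (4 : Fin 5) = 4 := by decide
lemma g2b_0 : ((2 : ℤ) • beta) (0 : Fin 5) = 0 := by decide
lemma g2b_1 : ((2 : ℤ) • beta) (1 : Fin 5) = 0 := by decide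
lemma g2b_2 : ((2 : ℤ) • beta) (2 : Fin 5) = 4 := by decide
lemma g2b_3 : ((2 : ℤ) • beta) (3 : Fin 5) = 0 := by decide
lemma g2b_4 : ((2 : ℤ) • beta) (4 : Fin 5) = 4 := by decide


lemma fin5_0' (h : 0 < 5) : (⟨0, h⟩ : Fin 5) = 0 := rfl
lemma fin5_1' (h : 1 < 5) : (⟨1, h⟩ : Fin 5) = 1 := rfl
lemma fin5_2' (h : 2 < 5) : (⟨2, h⟩ : Fin 5) = 2 := rfl
lemma fin5_3' (h : 3 < 5) : (⟨3, h⟩ : Fin 5) = 3 := rfl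
lemma fin5_4' (h : 4 < 5) : (⟨4, h⟩ : Fin 5) = 4 := rfl

def condD : Submodule ℤ (Fin 5 → ℤ) where
  carrier := {v | v 0 = 0 ∧ 4 ∣ v 1 ∧ 2 ∣ v 2 ∧ 4 ∣ (v 2 - v 3) ∧ 4 ∣ (v 2 - v 4) ∧
    8 ∣ (2*(v 2 + v 3 + v 4) + v 1)}
  add_mem' := by
    rintro a b ⟨h0, h1, h2, h3, h4, h5⟩ ⟨g0, g1, g2, g3, g4, g5⟩
    simp only [Set.mem_setOf_eq, Pi.add_apply]
    omega
  zero_mem' := by simp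
  smul_mem' := by
    rintro c x ⟨h0, h1, h2, h3, h4, h5⟩
    simp only [Set.mem_setOf_eq, Pi.smul_apply, smul_eq_mul]
    refine ⟨by rw [h0, mul_zero], h1.mul_left c, h2.mul_left c, ?_, ?_, ?_⟩
    · have := h3.mul_left c; convert this using 1; rfl; ring
    · have := h4.mul_left c; convert this using 1; rfl; ring
    · have := h5.mul_left c; convert this using 1; rfl; ring

def condI : Submodule ℤ (Fin 5 → ℤ) where
  carrier := {v | v 0 = 0 ∧ 4 ∣ v 1 ∧ 2 ∣ v 2 ∧ 2 ∣ v 3 ∧ 2 ∣ v 4 ∧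
    8 ∣ (2*(v 2 + v 3 - v 4) - v 1)}
  add_mem' := by
    rintro a b ⟨h0, h1, h2, h3, h4, h5⟩ ⟨g0, g1, g2, g3, g4, g5⟩
    simp only [Set.mem_setOf_eq, Pi.add_apply]
    omega
  zero_mem' := by simp
  smul_mem' := by
    rintro c x ⟨h0, h1, h2, h3, h4, h5⟩
    simp only [Set.mem_setOf_eq, Pi.smul_apply, smul_eq_mul]
    refine ⟨by rw [h0, mul_zero], h1.mul_left c, h2.mul_left c, h3.mul_left c,
      h4.mul_left c, ?_⟩
    have := h5.mul_left c; convert this using 1; rfl; ring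

def condC : Submodule ℤ (Fin 5 → ℤ) where
  carrier := {v | v 0 = 0 ∧ 4 ∣ v 1 ∧ 8 ∣ (2*(v 2) - v 1) ∧ 8 ∣ (2*(v 3) - v 1) ∧
    8 ∣ (2*(v 2 + v 3 - v 4) - v 1)}
  add_mem' := by
    rintro a b ⟨h0, h1, h2, h3, h4⟩ ⟨g0, g1, g2, g3, g4⟩
    simp only [Set.mem_setOf_eq, Pi.add_apply]
    omega
  zero_mem' := by simp
  smul_mem' := by
    rintro c x ⟨h0, h1, h2, h3, h4⟩
    simp only [Set.mem_setOf_eq, Pi.smul_apply, smul_eq_mul]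
    refine ⟨by rw [h0, mul_zero], h1.mul_left c, ?_, ?_, ?_⟩
    · have := h2.mul_left c; convert this using 1; rfl; ring
    · have := h3.mul_left c; convert this using 1; rfl; ring
    · have := h4.mul_left c; convert this using 1; rfl; ring

lemma mem_idealDel_iff (v : Fin 5 → ℤ) :
    v ∈ idealDel ↔ (v 0 = 0 ∧ 4 ∣ v 1 ∧ 2 ∣ v 2 ∧ 4 ∣ (v 2 - v 3) ∧ 4 ∣ (v 2 - v 4) ∧
      8 ∣ (2*(v 2 + v 3 + v 4) + v 1)) := by
  constructor
  · intro hv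
    have hle : idealDel ≤ condD := by
      rw [idealDel, Submodule.span_le]
      rintro x (rfl | rfl | rfl | rfl | rfl) <;>
        exact ⟨by decide, by decide, by decide, by decide, by decide, by decide⟩
    exact hle hv
  · rintro ⟨h0, h1, h2, h3, h4, h5⟩
    have key : v = (0 : ℤ) • (del * 1) + (-((v 3)/2 + (v 4)/2)/2) • (del * chi_i)
        + (-((v 2)/2 + (v 4)/2)/2) • (del * chi_j)
        + (-((v 2)/2 + (v 3)/2)/2) • (del * chi_k)
        + ((-(v 2 + v 3 + v 4)/2 - (v 1)/4)/2) • (del * chi_y) := by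
      funext i
      fin_cases i <;>
        simp only [fin5_0', fin5_1', fin5_2', fin5_3', fin5_4', Pi.add_apply,
          Pi.smul_apply, smul_eq_mul, gd1_0, gd1_1, gd1_2, gd1_3, gd1_4, gdi_0, gdi_1, gdi_2, gdi_3, gdi_4, gdj_0, gdj_1, gdj_2, gdj_3, gdj_4, gdk_0, gdk_1, gdk_2, gdk_3, gdk_4, gdy_0, gdy_1, gdy_2, gdy_3, gdy_4, ga_0, ga_1, ga_2, ga_3, ga_4, gb_0, gb_1, gb_2, gb_3, gb_4, gg_0, gg_1, gg_2, gg_3, gg_4, gd_0, gd_1, gd_2, gd_3, gd_4, g2a_0, g2a_1, g2a_2, g2a_3, g2a_4, g2b_0, g2b_1, g2b_2, g2b_3, g2b_4] <;>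
        omega
    rw [key]
    have m1 : del * 1 ∈ idealDel := Submodule.subset_span (by simp)
    have m2 : del * chi_i ∈ idealDel := Submodule.subset_span (by simp)
    have m3 : del * chi_j ∈ idealDel := Submodule.subset_span (by simp)
    have m4 : del * chi_k ∈ idealDel := Submodule.subset_span (by simp)
    have m5 : del * chi_y ∈ idealDel := Submodule.subset_span (by simp)
    exact Submodule.add_mem _ (Submodule.add_mem _ (Submodule.add_mem _
      (Submodule.add_mem _ (Submodule.smul_mem _ _ m1) (Submodule.smul_mem _ _ m2))
      (Submodule.smul_mem _ _ m3)) (Submodule.smul_mem _ _ m4)) (Submodule.smul_mem _ _ m5)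

lemma mem_IQ8_iff (v : Fin 5 → ℤ) :
    v ∈ IQ8 ↔ (v 0 = 0 ∧ 4 ∣ v 1 ∧ 2 ∣ v 2 ∧ 2 ∣ v 3 ∧ 2 ∣ v 4 ∧
      8 ∣ (2*(v 2 + v 3 - v 4) - v 1)) := by
  constructor
  · intro hv
    have hle : IQ8 ≤ condI := by
      rw [IQ8, Submodule.span_le]
      rintro x (rfl | rfl | rfl | rfl) <;>
        exact ⟨by decide, by decide, by decide, by decide, by decide, by decide⟩
    exact hle hv
  · rintro ⟨h0, h1, h2, h3, h4, h5⟩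
    have key : v = ((v 4 - v 2)/2) • alpha + ((v 4 - v 3)/2) • beta
        + ((2*(v 2 + v 3 - v 4) - v 1)/8) • gam + ((v 1)/4) • del := by
      funext i
      fin_cases i <;>
        simp only [fin5_0', fin5_1', fin5_2', fin5_3', fin5_4', Pi.add_apply,
          Pi.smul_apply, smul_eq_mul, gd1_0, gd1_1, gd1_2, gd1_3, gd1_4, gdi_0, gdi_1, gdi_2, gdi_3, gdi_4, gdj_0, gdj_1, gdj_2, gdj_3, gdj_4, gdk_0, gdk_1, gdk_2, gdk_3, gdk_4, gdy_0, gdy_1, gdy_2, gdy_3, gdy_4, ga_0, ga_1, ga_2, ga_3, ga_4, gb_0, gb_1, gb_2, gb_3, gb_4, gg_0, gg_1, gg_2, gg_3, gg_4, gd_0, gd_1, gd_2, gd_3, gd_4, g2a_0, g2a_1, g2a_2, g2a_3, g2a_4, g2b_0, g2b_1, g2b_2, g2b_3, g2b_4] <;>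
        omega
    rw [key]
    have m1 : alpha ∈ IQ8 := Submodule.subset_span (by simp)
    have m2 : beta ∈ IQ8 := Submodule.subset_span (by simp)
    have m3 : gam ∈ IQ8 := Submodule.subset_span (by simp)
    have m4 : del ∈ IQ8 := Submodule.subset_span (by simp)
    exact Submodule.add_mem _ (Submodule.add_mem _ (Submodule.add_mem _
      (Submodule.smul_mem _ _ m1) (Submodule.smul_mem _ _ m2))
      (Submodule.smul_mem _ _ m3)) (Submodule.smul_mem _ _ m4)

lemma mem_spanC_iff (v : Fin 5 → ℤ) :
    v ∈ Submodule.span ℤ {(2 : ℤ) • alpha, (2 : ℤ) • beta, gam, del} ↔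
      (v 0 = 0 ∧ 4 ∣ v 1 ∧ 8 ∣ (2*(v 2) - v 1) ∧ 8 ∣ (2*(v 3) - v 1) ∧
       8 ∣ (2*(v 2 + v 3 - v 4) - v 1)) := by
  constructor
  · intro hv
    have hle : Submodule.span ℤ {(2 : ℤ) • alpha, (2 : ℤ) • beta, gam, del} ≤ condC := by
      rw [Submodule.span_le]
      rintro x (rfl | rfl | rfl | rfl) <;>
        exact ⟨by decide, by decide, by decide, by decide, by decide⟩
    exact hle hv
  · rintro ⟨h0, h1, h2, h3, h4⟩
    have key : v = ((2*(v 3) - v 1 - 8*((2*(v 2 + v 3 - v 4) - v 1)/8))/8) • ((2 : ℤ) • alpha)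
        + ((2*(v 2) - v 1 - 8*((2*(v 2 + v 3 - v 4) - v 1)/8))/8) • ((2 : ℤ) • beta)
        + ((2*(v 2 + v 3 - v 4) - v 1)/8) • gam + ((v 1)/4) • del := by
      funext i
      fin_cases i <;>
        simp only [fin5_0', fin5_1', fin5_2', fin5_3', fin5_4', Pi.add_apply,
          Pi.smul_apply, smul_eq_mul, gd1_0, gd1_1, gd1_2, gd1_3, gd1_4, gdi_0, gdi_1, gdi_2, gdi_3, gdi_4, gdj_0, gdj_1, gdj_2, gdj_3, gdj_4, gdk_0, gdk_1, gdk_2, gdk_3, gdk_4, gdy_0, gdy_1, gdy_2, gdy_3, gdy_4, ga_0, ga_1, ga_2, ga_3, ga_4, gb_0, gb_1, gb_2, gb_3, gb_4, gg_0, gg_1, gg_2, gg_3, gg_4, gd_0, gd_1, gd_2, gd_3, gd_4, g2a_0, g2a_1, g2a_2, g2a_3, g2a_4, g2b_0, g2b_1, g2b_2, g2b_3, g2b_4] <;>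
        omega
    rw [key]
    have m1 : (2 : ℤ) • alpha ∈ Submodule.span ℤ {(2 : ℤ) • alpha, (2 : ℤ) • beta, gam, del} :=
      Submodule.subset_span (by simp)
    have m2 : (2 : ℤ) • beta ∈ Submodule.span ℤ {(2 : ℤ) • alpha, (2 : ℤ) • beta, gam, del} :=
      Submodule.subset_span (by simp)
    have m3 : gam ∈ Submodule.span ℤ {(2 : ℤ) • alpha, (2 : ℤ) • beta, gam, del} :=
      Submodule.subset_span (by simp)
    have m4 : del ∈ Submodule.span ℤ {(2 : ℤ) • alpha, (2 : ℤ) • beta, gam, del} :=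
      Submodule.subset_span (by simp)
    exact Submodule.add_mem _ (Submodule.add_mem _ (Submodule.add_mem _
      (Submodule.smul_mem _ _ m1) (Submodule.smul_mem _ _ m2))
      (Submodule.smul_mem _ _ m3)) (Submodule.smul_mem _ _ m4)

noncomputable def fmap : IQ8 →ₗ[ℤ] ZMod 2 × ZMod 2 where
  toFun x := ((((x.1 4 - x.1 2)/2 : ℤ) : ZMod 2), (((x.1 4 - x.1 3)/2 : ℤ) : ZMod 2))
  map_add' x y := by
    obtain ⟨h0, h1, h2, h3, h4, h5⟩ := (mem_IQ8_iff _).1 x.2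
    obtain ⟨g0, g1, g2, g3, g4, g5⟩ := (mem_IQ8_iff _).1 y.2
    have d1 : (((x : Fin 5 → ℤ) + (y : Fin 5 → ℤ)) 4 - ((x : Fin 5 → ℤ) + (y : Fin 5 → ℤ)) 2)/2
        = ((x : Fin 5 → ℤ) 4 - (x : Fin 5 → ℤ) 2)/2 + ((y : Fin 5 → ℤ) 4 - (y : Fin 5 → ℤ) 2)/2 := by
      simp only [Pi.add_apply]
      omega
    have d2 : (((x : Fin 5 → ℤ) + (y : Fin 5 → ℤ)) 4 - ((x : Fin 5 → ℤ) + (y : Fin 5 → ℤ)) 3)/2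
        = ((x : Fin 5 → ℤ) 4 - (x : Fin 5 → ℤ) 3)/2 + ((y : Fin 5 → ℤ) 4 - (y : Fin 5 → ℤ) 3)/2 := by
      simp only [Pi.add_apply]
      omega
    simp only [Submodule.coe_add, Prod.mk_add_mk, Prod.mk.injEq, d1, d2]
    constructor <;> push_cast <;> ring
  map_smul' c x := by
    obtain ⟨h0, h1, h2, h3, h4, h5⟩ := (mem_IQ8_iff _).1 x.2
    have d1 : ((c • (x : Fin 5 → ℤ)) 4 - (c • (x : Fin 5 → ℤ)) 2)/2
        = c * (((x : Fin 5 → ℤ) 4 - (x : Fin 5 → ℤ) 2)/2) := by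
      simp only [Pi.smul_apply, smul_eq_mul]
      obtain ⟨k, hk⟩ : (2:ℤ) ∣ ((x : Fin 5 → ℤ) 4 - (x : Fin 5 → ℤ) 2) := by omega
      have hx4 : c * (x : Fin 5 → ℤ) 4 - c * (x : Fin 5 → ℤ) 2
          = 2 * (c * k) := by rw [← mul_sub, hk]; ring
      rw [hx4, Int.mul_ediv_cancel_left _ (by norm_num), hk,
        Int.mul_ediv_cancel_left _ (by norm_num)]
    have d2 : ((c • (x : Fin 5 → ℤ)) 4 - (c • (x : Fin 5 → ℤ)) 3)/2
        = c * (((x : Fin 5 → ℤ) 4 - (x : Fin 5 → ℤ) 3)/2) := by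
      simp only [Pi.smul_apply, smul_eq_mul]
      obtain ⟨k, hk⟩ : (2:ℤ) ∣ ((x : Fin 5 → ℤ) 4 - (x : Fin 5 → ℤ) 3) := by omega
      have hx4 : c * (x : Fin 5 → ℤ) 4 - c * (x : Fin 5 → ℤ) 3
          = 2 * (c * k) := by rw [← mul_sub, hk]; ring
      rw [hx4, Int.mul_ediv_cancel_left _ (by norm_num), hk,
        Int.mul_ediv_cancel_left _ (by norm_num)]
    simp only [SetLike.val_smul, RingHom.id_apply, Prod.smul_mk, Prod.mk.injEq]
    constructor
    · rw [d1, zsmul_eq_mul]; push_cast; ring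
    · rw [d2, zsmul_eq_mul]; push_cast; ring

lemma fmap_alpha : fmap ⟨alpha, alpha_mem_IQ8⟩ = (1, 0) := by
  simp only [fmap, LinearMap.coe_mk, AddHom.coe_mk, ga_2, ga_3, ga_4]
  norm_num

lemma fmap_beta : fmap ⟨beta, beta_mem_IQ8⟩ = (0, 1) := by
  simp only [fmap, LinearMap.coe_mk, AddHom.coe_mk, gb_2, gb_3, gb_4]
  norm_num

lemma fmap_surj : Function.Surjective fmap := by
  intro z
  refine ⟨z.1.val • ⟨alpha, alpha_mem_IQ8⟩ + z.2.val • ⟨beta, beta_mem_IQ8⟩, ?_⟩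
  rw [map_add, map_nsmul, map_nsmul, fmap_alpha, fmap_beta]
  have key : ∀ w : ZMod 2, w.val • (1 : ZMod 2) = w := by decide
  ext
  · simp only [Prod.fst_add, Prod.smul_mk, Prod.fst, smul_zero]
    rw [key z.1]
    exact add_zero _
  · simp only [Prod.snd_add, Prod.smul_mk, Prod.snd, smul_zero]
    rw [key z.2]
    exact zero_add _

lemma fmap_ker : LinearMap.ker fmap = idealDel.comap IQ8.subtype := by
  ext x
  obtain ⟨h0, h1, h2, h3, h4, h5⟩ := (mem_IQ8_iff _).1 x.2
  simp only [LinearMap.mem_ker, Submodule.mem_comap, Submodule.coe_subtype,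
    mem_idealDel_iff, fmap, LinearMap.coe_mk, AddHom.coe_mk, Prod.mk_eq_zero,
    ZMod.intCast_zmod_eq_zero_iff_dvd]
  omega

lemma quot_eval (x : IQ8) :
    ((Submodule.quotEquivOfEq _ _ fmap_ker.symm).trans
      (fmap.quotKerEquivOfSurjective fmap_surj)) (Submodule.Quotient.mk x) = fmap x := rfl

/-- The ideal `(δ)` of `R(Q₈)`, intersected with the augmentation ideal `I(Q₈)`, is the
subgroup generated by `2α, 2β, γ, δ`, and the quotient `I(Q₈)/(δ)` is isomorphic to
`ℤ/2 ⊕ ℤ/2`, generated by the classes of `α` and `β`. -/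
theorem q8_ideal_delta_and_quotient :
    idealDel ⊓ IQ8 =
      Submodule.span ℤ {(2 : ℤ) • alpha, (2 : ℤ) • beta, gam, del} ∧
    ∃ e : (IQ8 ⧸ idealDel.comap IQ8.subtype) ≃ₗ[ℤ] ZMod 2 × ZMod 2,
      e (Submodule.Quotient.mk ⟨alpha, alpha_mem_IQ8⟩) = (1, 0) ∧
      e (Submodule.Quotient.mk ⟨beta, beta_mem_IQ8⟩) = (0, 1) := by
  constructor
  · ext v
    simp only [Submodule.mem_inf, mem_idealDel_iff, mem_IQ8_iff, mem_spanC_iff]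
    omega
  · exact ⟨(Submodule.quotEquivOfEq _ _ fmap_ker.symm).trans
      (fmap.quotKerEquivOfSurjective fmap_surj),
      by rw [quot_eval, fmap_alpha], by rw [quot_eval, fmap_beta]⟩
end

section
/- The quotient of the augmentation ideal I(Q8) by the ideal generated by δ² (where δ = 2 - y) is isomorphic to ℤ/4 ⊕ ℤ/4 ⊕ ℤ/8, with generators the classes of α, β, δ respectively. -/
/-- The ideal `(δ²)` of `R(Q₈)`: its underlying additive group is spanned by `δ²` times
the `ℤ`-basis `1, x_i, x_j, x_k, y` of `R(Q₈)`. -/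
def idealDelSq : Submodule ℤ (Fin 5 → ℤ) :=
  Submodule.span ℤ
    {del ^ 2 * 1, del ^ 2 * chi_i, del ^ 2 * chi_j, del ^ 2 * chi_k, del ^ 2 * chi_y}

lemma del_mem_IQ8 : del ∈ IQ8 := Submodule.subset_span (by simp)

/-! Auxiliary development -/

namespace Q8Aux

lemma alpha_vec : alpha = ![0,0,0,2,2] := by
  funext i; fin_cases i <;> simp [alpha, chi_i]
lemma beta_vec : beta = ![0,0,2,0,2] := by
  funext i; fin_cases i <;> simp [beta, chi_j]
lemma three_apply (i : Fin 5) : (3 : Fin 5 → ℤ) i = 3 := rfl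
lemma two_apply (i : Fin 5) : (2 : Fin 5 → ℤ) i = 2 := rfl
lemma gam_vec : gam = ![0,0,4,4,4] := by
  funext i; fin_cases i <;> simp [gam, chi_i, chi_j, chi_k, three_apply] <;> rfl
lemma del_vec : del = ![0,4,2,2,2] := by
  funext i; fin_cases i <;> simp [del, chi_y, two_apply]

/-- the map `(a,b,c,d) ↦ aα + bβ + cγ + dδ` -/
def Mmap : (Fin 4 → ℤ) →ₗ[ℤ] (Fin 5 → ℤ) where
  toFun x := x 0 • alpha + x 1 • beta + x 2 • gam + x 3 • del
  map_add' x y := by simp only [Pi.add_apply, add_smul]; abel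
  map_smul' c x := by simp only [Pi.smul_apply, smul_eq_mul, mul_smul, RingHom.id_apply,
    smul_add]

lemma Mmap_apply_vec (x : Fin 4 → ℤ) :
    Mmap x = ![0, 4 * x 3, 2 * x 1 + 4 * x 2 + 2 * x 3,
      2 * x 0 + 4 * x 2 + 2 * x 3, 2 * x 0 + 2 * x 1 + 4 * x 2 + 2 * x 3] := by
  funext i
  simp only [Mmap, LinearMap.coe_mk, AddHom.coe_mk, alpha_vec, beta_vec, gam_vec, del_vec]
  fin_cases i <;> simp <;> ring

lemma Mmap_injective : Function.Injective Mmap := by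
  intro x y h
  rw [Mmap_apply_vec, Mmap_apply_vec] at h
  have h1 := congrFun h 1
  have h2 := congrFun h 2
  have h3 := congrFun h 3
  have h4 := congrFun h 4
  simp at h1 h2 h3 h4
  funext i; fin_cases i <;> simp <;> omega

lemma Malpha : Mmap ![1,0,0,0] = alpha := by
  rw [Mmap_apply_vec, alpha_vec]; funext i; fin_cases i <;> simp
lemma Mbeta : Mmap ![0,1,0,0] = beta := by
  rw [Mmap_apply_vec, beta_vec]; funext i; fin_cases i <;> simp
lemma Mgam : Mmap ![0,0,1,0] = gam := by
  rw [Mmap_apply_vec, gam_vec]; funext i; fin_cases i <;> simp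
lemma Mdel : Mmap ![0,0,0,1] = del := by
  rw [Mmap_apply_vec, del_vec]; funext i; fin_cases i <;> simp

lemma Mmap_range : LinearMap.range Mmap = IQ8 := by
  apply le_antisymm
  · rintro _ ⟨x, rfl⟩
    show x 0 • alpha + x 1 • beta + x 2 • gam + x 3 • del ∈ IQ8
    apply Submodule.add_mem _ (Submodule.add_mem _ (Submodule.add_mem _ _ _) _) _ <;>
      exact Submodule.smul_mem _ _ (Submodule.subset_span (by simp))
  · rw [IQ8]
    rw [Submodule.span_le]
    rintro v (rfl | rfl | rfl | rfl)
    · exact ⟨![1,0,0,0], Malpha⟩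
    · exact ⟨![0,1,0,0], Mbeta⟩
    · exact ⟨![0,0,1,0], Mgam⟩
    · exact ⟨![0,0,0,1], Mdel⟩

lemma Mmap_mem (x : Fin 4 → ℤ) : Mmap x ∈ IQ8 := Mmap_range ▸ ⟨x, rfl⟩

/-- the equivalence `ℤ⁴ ≃ I(Q₈)` -/
noncomputable def E : (Fin 4 → ℤ) ≃ₗ[ℤ] IQ8 :=
  LinearEquiv.ofBijective (Mmap.codRestrict IQ8 Mmap_mem)
    ⟨fun x y h => Mmap_injective (congrArg Subtype.val h),
     fun ⟨v, hv⟩ => by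
      obtain ⟨x, hx⟩ : v ∈ LinearMap.range Mmap := Mmap_range ▸ hv
      exact ⟨x, Subtype.ext hx⟩⟩

lemma E_apply (x : Fin 4 → ℤ) : (E x : Fin 5 → ℤ) = Mmap x := rfl

/-- relation lattice -/
def Krel : Submodule ℤ (Fin 4 → ℤ) :=
  Submodule.span ℤ {![0,0,-1,4], ![-4,0,-1,4], ![0,-4,-1,4], ![4,4,-5,4], ![0,0,4,-8]}

lemma delsq_vec : del ^ 2 = ![0,16,4,4,4] := by
  have : del ^ 2 = del * del := sq del
  rw [this, del_vec]; funext i; fin_cases i <;> simp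

lemma gen1 : Mmap ![0,0,-1,4] = del ^ 2 * 1 := by
  rw [Mmap_apply_vec, delsq_vec]; funext i; fin_cases i <;> simp
lemma gen2 : Mmap ![-4,0,-1,4] = del ^ 2 * chi_i := by
  rw [Mmap_apply_vec, delsq_vec]; funext i; fin_cases i <;> simp [chi_i]
lemma gen3 : Mmap ![0,-4,-1,4] = del ^ 2 * chi_j := by
  rw [Mmap_apply_vec, delsq_vec]; funext i; fin_cases i <;> simp [chi_j]
lemma gen4 : Mmap ![4,4,-5,4] = del ^ 2 * chi_k := by
  rw [Mmap_apply_vec, delsq_vec]; funext i; fin_cases i <;> simp [chi_k]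
lemma gen5 : Mmap ![0,0,4,-8] = del ^ 2 * chi_y := by
  rw [Mmap_apply_vec, delsq_vec]; funext i; fin_cases i <;> simp [chi_y]

lemma map_Mmap_Krel : Krel.map Mmap = idealDelSq := by
  rw [Krel, Submodule.map_span, idealDelSq]
  congr 1
  simp only [Set.image_insert_eq, Set.image_singleton, gen1, gen2, gen3, gen4, gen5]

lemma idealDelSq_le_IQ8 : idealDelSq ≤ IQ8 := by
  rw [← map_Mmap_Krel]
  rintro _ ⟨x, _, rfl⟩
  exact Mmap_mem x

lemma map_E_Krel : Krel.map (E : (Fin 4 → ℤ) →ₗ[ℤ] IQ8) = idealDelSq.comap IQ8.subtype := by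
  apply Submodule.map_injective_of_injective (Submodule.injective_subtype IQ8)
  rw [Submodule.map_comap_subtype, inf_eq_right.mpr idealDelSq_le_IQ8,
    ← Submodule.map_comp]
  have : IQ8.subtype ∘ₗ (E : (Fin 4 → ℤ) →ₗ[ℤ] IQ8) = Mmap := by
    ext x; rfl
  rw [this, map_Mmap_Krel]

/-- the quotient functional -/
def qmap : (Fin 4 → ℤ) →ₗ[ℤ] ZMod 4 × ZMod 4 × ZMod 8 where
  toFun x := ((x 0 : ZMod 4), (x 1 : ZMod 4), ((x 3 + 4 * x 2 : ℤ) : ZMod 8))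
  map_add' x y := by
    simp only [Pi.add_apply, Prod.mk_add_mk, Prod.mk.injEq]
    refine ⟨by push_cast; ring, by push_cast; ring, by push_cast; ring⟩
  map_smul' c x := by
    simp only [Pi.smul_apply, smul_eq_mul, RingHom.id_apply, Prod.smul_mk, zsmul_eq_mul]
    refine Prod.ext (by push_cast; ring) (Prod.ext (by push_cast; ring) (by push_cast; ring))

lemma Krel_le_ker : Krel ≤ LinearMap.ker qmap := by
  rw [Krel, Submodule.span_le]
  rintro v (rfl | rfl | rfl | rfl | rfl) <;>
    · show qmap _ = 0
      decide

lemma ker_le_Krel : LinearMap.ker qmap ≤ Krel := by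
  intro x hx
  have h0 : ((x 0 : ℤ) : ZMod 4) = 0 := congrArg Prod.fst hx
  have h1 : ((x 1 : ℤ) : ZMod 4) = 0 := congrArg (Prod.fst ∘ Prod.snd) hx
  have h2 : ((x 3 + 4 * x 2 : ℤ) : ZMod 8) = 0 := congrArg (Prod.snd ∘ Prod.snd) hx
  rw [ZMod.intCast_zmod_eq_zero_iff_dvd] at h0 h1 h2
  obtain ⟨a, ha⟩ := h0
  obtain ⟨b, hb⟩ := h1
  obtain ⟨c, hc⟩ := h2
  have hx' : x = (a + b - x 2 + 4*c) • ![0,0,-1,4] + (-a) • ![-4,0,-1,4]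
      + (-b) • ![0,-4,-1,4] + c • ![0,0,4,-8] := by
    funext i; fin_cases i <;> simp <;> push_cast at ha hb hc ⊢ <;> omega
  rw [hx']
  apply Submodule.add_mem _ (Submodule.add_mem _ (Submodule.add_mem _ _ _) _) _ <;>
    exact Submodule.smul_mem _ _ (Submodule.subset_span (by simp))

lemma qmap_surjective : Function.Surjective qmap := by
  rintro ⟨u, v, w⟩
  obtain ⟨a, rfl⟩ := ZMod.intCast_surjective u
  obtain ⟨b, rfl⟩ := ZMod.intCast_surjective v
  obtain ⟨d, rfl⟩ := ZMod.intCast_surjective w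
  exact ⟨![a, b, 0, d], by simp [qmap]⟩

noncomputable def e2 : ((Fin 4 → ℤ) ⧸ Krel) ≃ₗ[ℤ] ZMod 4 × ZMod 4 × ZMod 8 :=
  LinearEquiv.ofBijective (Krel.liftQ qmap Krel_le_ker)
    ⟨by
      rw [← LinearMap.ker_eq_bot]
      exact Submodule.ker_liftQ_eq_bot _ _ _ ker_le_Krel,
     fun z => by
      obtain ⟨x, rfl⟩ := qmap_surjective z
      exact ⟨Submodule.Quotient.mk x, Submodule.liftQ_apply _ _ _⟩⟩

lemma e2_mk (x : Fin 4 → ℤ) : e2 (Submodule.Quotient.mk x) = qmap x := rfl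

end Q8Aux

open Q8Aux

/-- The quotient of the augmentation ideal `I(Q₈)` by the ideal `(δ²)` is isomorphic to
`ℤ/4 ⊕ ℤ/4 ⊕ ℤ/8`, with generators the classes of `α`, `β`, `δ` respectively. -/
theorem q8_I_mod_delta_squared :
    ∃ e : (IQ8 ⧸ idealDelSq.comap IQ8.subtype) ≃ₗ[ℤ] ZMod 4 × ZMod 4 × ZMod 8,
      e (Submodule.Quotient.mk ⟨alpha, alpha_mem_IQ8⟩) = (1, 0, 0) ∧
      e (Submodule.Quotient.mk ⟨beta, beta_mem_IQ8⟩) = (0, 1, 0) ∧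
      e (Submodule.Quotient.mk ⟨del, del_mem_IQ8⟩) = (0, 0, 1) := by
  have hmap : (idealDelSq.comap IQ8.subtype).map (E.symm : IQ8 →ₗ[ℤ] (Fin 4 → ℤ)) = Krel :=
    (Submodule.map_symm_eq_iff E).mpr map_E_Krel
  refine ⟨(Submodule.Quotient.equiv _ Krel E.symm hmap).trans e2, ?_, ?_, ?_⟩
  · have hα : E ![1,0,0,0] = ⟨alpha, alpha_mem_IQ8⟩ := Subtype.ext Malpha
    rw [← hα]
    simp only [LinearEquiv.trans_apply, Submodule.Quotient.equiv_apply, Submodule.mapQ_apply,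
      LinearEquiv.coe_coe, LinearEquiv.symm_apply_apply, e2_mk]
    show qmap ![1,0,0,0] = _
    simp [qmap]
  · have hβ : E ![0,1,0,0] = ⟨beta, beta_mem_IQ8⟩ := Subtype.ext Mbeta
    rw [← hβ]
    simp only [LinearEquiv.trans_apply, Submodule.Quotient.equiv_apply, Submodule.mapQ_apply,
      LinearEquiv.coe_coe, LinearEquiv.symm_apply_apply, e2_mk]
    show qmap ![0,1,0,0] = _
    simp [qmap]
  · have hδ : E ![0,0,0,1] = ⟨del, del_mem_IQ8⟩ := Subtype.ext Mdel
    rw [← hδ]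
    simp only [LinearEquiv.trans_apply, Submodule.Quotient.equiv_apply, Submodule.mapQ_apply,
      LinearEquiv.coe_coe, LinearEquiv.symm_apply_apply, e2_mk]
    show qmap ![0,0,0,1] = _
    simp [qmap]
end

section
/- In the quotient ring R(Q8)/(δ²), the class of δ = 2 - y has additive order exactly 8. -/
lemma del_mem_RQ8 : del ∈ RQ8 := by
  have h1 : (1 : Fin 5 → ℤ) ∈ RQ8 := Submodule.subset_span (by simp)
  have hy : chi_y ∈ RQ8 := Submodule.subset_span (by simp)
  have h : del = (2 : ℤ) • (1 : Fin 5 → ℤ) - chi_y := by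
    funext i; simp [del]
  rw [h]
  exact sub_mem (Submodule.smul_mem _ _ h1) hy


/-- Linear functional `v ↦ v 1 + 4 * v 4` into `ZMod 32`. -/
def F : (Fin 5 → ℤ) →ₗ[ℤ] ZMod 32 where
  toFun v := (v 1 : ZMod 32) + 4 * (v 4 : ZMod 32)
  map_add' v w := by push_cast [Pi.add_apply]; ring
  map_smul' c v := by
    simp only [Pi.smul_apply, smul_eq_mul, RingHom.id_apply, zsmul_eq_mul]
    push_cast; ring

lemma ideal_le_ker : idealDelSq ≤ LinearMap.ker F := by
  rw [idealDelSq, Submodule.span_le]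
  intro v hv
  simp only [Set.mem_insert_iff, Set.mem_singleton_iff] at hv
  rcases hv with h | h | h | h | h <;> subst h <;>
    simp [F, LinearMap.mem_ker, del, chi_i, chi_j, chi_k, chi_y, Pi.mul_apply, Pi.pow_apply,
      Pi.sub_apply, Pi.one_apply] <;> decide

lemma eight_del_mem : (8 : ℤ) • del ∈ idealDelSq := by
  have h1 : del ^ 2 * 1 ∈ idealDelSq := Submodule.subset_span (by simp)
  have hy : del ^ 2 * chi_y ∈ idealDelSq := Submodule.subset_span (by simp)
  have h : (8 : ℤ) • del = (4 : ℤ) • (del ^ 2 * 1) + del ^ 2 * chi_y := by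
    funext i
    fin_cases i <;>
      simp [del, chi_y, Pi.mul_apply, Pi.pow_apply, Pi.sub_apply, Pi.one_apply] <;> decide
  rw [h]
  exact add_mem (Submodule.smul_mem _ _ h1) hy

lemma four_del_not_mem : (4 : ℤ) • del ∉ idealDelSq := by
  intro h
  have hF := ideal_le_ker h
  rw [LinearMap.mem_ker] at hF
  have h1 : del 1 = 4 := by norm_num [del, chi_y]
  have h4 : del 4 = 2 := by norm_num [del, chi_y]; decide
  have : F ((4 : ℤ) • del) = 16 := by
    simp only [F, LinearMap.coe_mk, AddHom.coe_mk, Pi.smul_apply, smul_eq_mul, h1, h4]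
    decide
  rw [hF] at this
  exact absurd this (by decide)

/-- In the quotient ring `R(Q₈)/(δ²)`, the class of `δ = 2 - y` has additive order
exactly `8`. -/
theorem q8_delta_order_eight :
    addOrderOf
      (Submodule.Quotient.mk (⟨del, del_mem_RQ8⟩ : RQ8) :
        RQ8 ⧸ idealDelSq.comap RQ8.subtype) = 8 := by
  have key : ∀ n : ℕ, (n • (Submodule.Quotient.mk (⟨del, del_mem_RQ8⟩ : RQ8) :
      RQ8 ⧸ idealDelSq.comap RQ8.subtype) = 0) ↔ (n : ℤ) • del ∈ idealDelSq := by
    intro n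
    rw [← Nat.cast_smul_eq_nsmul ℤ, ← Submodule.Quotient.mk_smul,
      Submodule.Quotient.mk_eq_zero, Submodule.mem_comap]
    rfl
  have h8 : (2 ^ 3 : ℕ) • (Submodule.Quotient.mk (⟨del, del_mem_RQ8⟩ : RQ8) :
      RQ8 ⧸ idealDelSq.comap RQ8.subtype) = 0 := by
    rw [key]; exact_mod_cast eight_del_mem
  have h4 : ¬ (2 ^ 2 : ℕ) • (Submodule.Quotient.mk (⟨del, del_mem_RQ8⟩ : RQ8) :
      RQ8 ⧸ idealDelSq.comap RQ8.subtype) = 0 := by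
    rw [key]; exact_mod_cast four_del_not_mem
  have := addOrderOf_eq_prime_pow (p := 2) (n := 2) h4 h8
  simpa using this
end

section
/- The ideal of R(Q8) generated by δ² (where δ = 2 - y) is, as a subgroup of I(Q8), generated by 4α, 4β, 8δ, and γ - 4δ. -/
/-- The ideal of `R(Q₈)` generated by `δ²` is, as a subgroup of `I(Q₈)`, generated by
`4α`, `4β`, `8δ`, and `γ - 4δ`. -/
theorem q8_ideal_delta_squared_generators :
    idealDelSq =
      Submodule.span ℤ
        {(4 : ℤ) • alpha, (4 : ℤ) • beta, (8 : ℤ) • del, gam - (4 : ℤ) • del} := by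
  have e1 : del ^ 2 * 1 = (-1 : ℤ) • (gam - (4 : ℤ) • del) := by decide
  have e2 : del ^ 2 * chi_i =
      (-1 : ℤ) • (gam - (4 : ℤ) • del) + (-1 : ℤ) • ((4 : ℤ) • alpha) := by decide
  have e3 : del ^ 2 * chi_j =
      (-1 : ℤ) • (gam - (4 : ℤ) • del) + (-1 : ℤ) • ((4 : ℤ) • beta) := by decide
  have e4 : del ^ 2 * chi_k =
      ((1 : ℤ) • ((4 : ℤ) • alpha) + (1 : ℤ) • ((4 : ℤ) • beta)) +
        ((-2 : ℤ) • ((8 : ℤ) • del) + (-5 : ℤ) • (gam - (4 : ℤ) • del)) := by decide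
  have e5 : del ^ 2 * chi_y =
      (1 : ℤ) • ((8 : ℤ) • del) + (4 : ℤ) • (gam - (4 : ℤ) • del) := by decide
  have f1 : gam - (4 : ℤ) • del = (-1 : ℤ) • (del ^ 2 * 1) := by decide
  have f2 : (4 : ℤ) • alpha = (1 : ℤ) • (del ^ 2 * 1) + (-1 : ℤ) • (del ^ 2 * chi_i) := by
    decide
  have f3 : (4 : ℤ) • beta = (1 : ℤ) • (del ^ 2 * 1) + (-1 : ℤ) • (del ^ 2 * chi_j) := by
    decide
  have f4 : (8 : ℤ) • del = (4 : ℤ) • (del ^ 2 * 1) + (1 : ℤ) • (del ^ 2 * chi_y) := by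
    decide
  set T := Submodule.span ℤ
    {(4 : ℤ) • alpha, (4 : ℤ) • beta, (8 : ℤ) • del, gam - (4 : ℤ) • del} with hT
  have hA : (4 : ℤ) • alpha ∈ T := Submodule.subset_span (Set.mem_insert _ _)
  have hB : (4 : ℤ) • beta ∈ T :=
    Submodule.subset_span (Set.mem_insert_of_mem _ (Set.mem_insert _ _))
  have hD : (8 : ℤ) • del ∈ T :=
    Submodule.subset_span
      (Set.mem_insert_of_mem _ (Set.mem_insert_of_mem _ (Set.mem_insert _ _)))
  have hG : gam - (4 : ℤ) • del ∈ T :=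
    Submodule.subset_span (Set.mem_insert_of_mem _ (Set.mem_insert_of_mem _
      (Set.mem_insert_of_mem _ rfl)))
  have u1 : del ^ 2 * 1 ∈ idealDelSq := Submodule.subset_span (Set.mem_insert _ _)
  have u2 : del ^ 2 * chi_i ∈ idealDelSq :=
    Submodule.subset_span (Set.mem_insert_of_mem _ (Set.mem_insert _ _))
  have u3 : del ^ 2 * chi_j ∈ idealDelSq :=
    Submodule.subset_span
      (Set.mem_insert_of_mem _ (Set.mem_insert_of_mem _ (Set.mem_insert _ _)))
  have u5 : del ^ 2 * chi_y ∈ idealDelSq :=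
    Submodule.subset_span (Set.mem_insert_of_mem _ (Set.mem_insert_of_mem _
      (Set.mem_insert_of_mem _ (Set.mem_insert_of_mem _ rfl))))
  apply le_antisymm
  · rw [idealDelSq, Submodule.span_le]
    rintro x (rfl | rfl | rfl | rfl | rfl)
    · rw [e1]; exact Submodule.smul_mem _ _ hG
    · rw [e2]
      exact Submodule.add_mem _ (Submodule.smul_mem _ _ hG) (Submodule.smul_mem _ _ hA)
    · rw [e3]
      exact Submodule.add_mem _ (Submodule.smul_mem _ _ hG) (Submodule.smul_mem _ _ hB)
    · rw [e4]
      exact Submodule.add_mem _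
        (Submodule.add_mem _ (Submodule.smul_mem _ _ hA) (Submodule.smul_mem _ _ hB))
        (Submodule.add_mem _ (Submodule.smul_mem _ _ hD) (Submodule.smul_mem _ _ hG))
    · rw [e5]
      exact Submodule.add_mem _ (Submodule.smul_mem _ _ hD) (Submodule.smul_mem _ _ hG)
  · rw [hT, Submodule.span_le]
    rintro x (rfl | rfl | rfl | rfl)
    · rw [f2]
      exact Submodule.add_mem _ (Submodule.smul_mem _ _ u1) (Submodule.smul_mem _ _ u2)
    · rw [f3]
      exact Submodule.add_mem _ (Submodule.smul_mem _ _ u1) (Submodule.smul_mem _ _ u3)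
    · rw [f4]
      exact Submodule.add_mem _ (Submodule.smul_mem _ _ u1) (Submodule.smul_mem _ _ u5)
    · rw [f1]; exact Submodule.smul_mem _ _ u1
end

section
/- If the class 2 - η has additive order 8 in the reduced K-theory of S⁷/Q8 (where η is the bundle associated to the representation y), then the stable normal bundle of S⁷/Q8 is stably equivalent to 6 η_ℝ; in particular it has the form 2k·η_ℝ with k = 3 odd, so the identity map of S⁷/Q8 refutes the claim that any degree-one map f: K⁷ → S⁷/Q8 with stable normal bundle f*(2k η_ℝ), k odd, must have even degree. -/
/-- The counterexample to Akhmet'ev's Proposition 41, in the reduced `K`-theory of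
`S⁷/Q₈`.  Let `K` be the complex `K`-ring `K(S⁷/Q₈)` with `η` the class of the bundle
associated to the representation `y`, let `KO` be the reduced real `K`-group
`K̃O(S⁷/Q₈)` and `r : K → KO` the realification composed with reduction, so that the
reduced class of `η_ℝ` is `ηr = r (η - 2)`.  By the tangent-bundle computation
(`τ ⊕ ε¹ ≅ 2 η_ℝ`) the reduced stable tangent class is `τ = 2 • ηr`, and the stable
normal class `ν` satisfies `ν + τ = 0`.

If `2 - η` has additive order `8`, then the stable normal bundle of `S⁷/Q₈` is stably
`6 η_ℝ`, i.e. `ν = 6 • ηr`; in particular it has the form `2k • ηr` with `k = 3` odd,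
while the identity map of `S⁷/Q₈` has degree `1`, which is not even — refuting the claim
that any map `f : K⁷ → S⁷/Q₈` with stable normal bundle `f*(2k η_ℝ)`, `k` odd, must have
even degree. -/
theorem identity_map_refutes_akhmetev_proposition
    (K : Type*) [CommRing K] (KO : Type*) [AddCommGroup KO]
    (η : K) (r : K →+ KO)
    (horder : addOrderOf ((2 : K) - η) = 8)
    (ηr : KO) (hηr : ηr = r (η - 2))
    (τ ν : KO) (hτ : τ = 2 • ηr) (hν : ν + τ = 0) :
    ν = 6 • ηr ∧
    (∃ k : ℕ, Odd k ∧ ν = (2 * k) • ηr ∧ ¬ Even (1 : ℤ)) := by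
  have h8 : (8 : ℕ) • ((2 : K) - η) = 0 := by
    rw [← horder]; exact addOrderOf_nsmul_eq_zero _
  have h8' : (8 : ℕ) • ηr = 0 := by
    rw [hηr, ← map_nsmul]
    have : (8 : ℕ) • (η - 2) = -((8 : ℕ) • ((2 : K) - η)) := by
      rw [← smul_neg]; ring_nf
    rw [this, h8, neg_zero, map_zero]
  have hν' : ν = 6 • ηr := by
    have h : ν = -(2 • ηr) := by
      rw [hτ] at hν; exact eq_neg_of_add_eq_zero_left hν
    have h2 : (8 : ℕ) • ηr = 2 • ηr + 6 • ηr := by rw [← add_nsmul]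
    rw [h2] at h8'
    rw [h, neg_eq_iff_add_eq_zero]
    exact h8'
  exact ⟨hν', 3, ⟨1, rfl⟩, by rw [hν'], by decide⟩
end
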